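/- If (U₁^{x₁⁰,y₁⁰,δ}, U₂^{t₂⁰,y₁⁰,y₂⁰,δ}) is an admissible pair of type 1 at scale δ, then for all z₁ ∈ U₁^{x₁⁰,y₁⁰,δ} and z₂ ∈ U₂^{t₂⁰,y₁⁰,y₂⁰,δ} one has |τ_{z₁}(z₁,z₂)| ∼_8 C₀² ε ρ² δ and |τ_{z₂}(z₁,z₂)| ∼_{1000} C₀² ε ρ² (1 ∨ δ). -/

import Mathlib

/-!
Compare everything with the base height `y₁⁰`: in the sheared abscissae `s₁, s₂` cutting out
`U₁, U₂` one has exactly `τ_{(x,y₁⁰)}(z₁,z₂) = (t₂⁰ - x₁⁰) + (s₂(z₂) - s₁(z₁)) - ε R`, where `R`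
is the Taylor remainder of `h'` at `y₁⁰`, so `|R| ≤ C₃ |y₁ - y₁⁰|²`. Moving the base height of `τ`
from `y'` to `y` changes it by `(ε/2)(h''(y) - h''(y'))(y₂ - y₁)`, of size `ε C₃ |y - y'| C₀ ρ`.
As `|y₁ - y₁⁰| < ρ (1 ∧ δ)`, `τ_{z₁}(z₁,z₂)` lies within `(1 + C₃ + C₃ C₀) ε ρ² δ` of
`t₂⁰ - x₁⁰`, and `τ_{z₂}(z₁,z₂)` within `(1 + C₃ + C₃ C₀) ε ρ² (1 ∨ δ)` of `τ_{z₂⁰}(z₁⁰,z₂⁰)`.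
For `C₀ ≥ 4096 (1 + C₃)` both errors are below `C₀²/2048` times their scale, which fits into the
gaps between the admissibility windows `[C₀²/4, 4 C₀²)`, `[C₀²/512, 5 C₀²)` and the claimed ones.
-/

open Set MeasureTheory ENNReal Pointwise

noncomputable section

/-- `h` is a perturbation function of cubic type on `[-1,1]`,
with constants `C₃ > 0` and `Cl l` for `l ≥ 4`. -/
def CubicType (C₃ : ℝ) (Cl : ℕ → ℝ) (h : ℝ → ℝ) : Prop :=
  ContDiff ℝ (⊤ : ℕ∞) h ∧ h 0 = 0 ∧ deriv h 0 = 0 ∧ deriv (deriv h) 0 = 0 ∧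
  (∀ y ∈ Icc (-1 : ℝ) 1,
      C₃ / 4 ≤ |deriv (deriv (deriv h)) y| ∧ |deriv (deriv (deriv h)) y| ≤ C₃) ∧
  (∀ l : ℕ, 4 ≤ l → ∀ y ∈ Icc (-1 : ℝ) 1, |iteratedDeriv l h y| ≤ Cl l)

/-- The transversality quantity `τ_z(z₁,z₂)` for the phase `φ(x,y) = xy + ε h(y)`. -/
def tau (ε : ℝ) (h : ℝ → ℝ) (z z₁ z₂ : ℝ × ℝ) : ℝ :=
  z₂.1 - z₁.1 + ε * (deriv h z₂.2 - deriv h z₁.2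
      - (1 / 2) * deriv (deriv h) z.2 * (z₂.2 - z₁.2))

/-- A (positive) dyadic number. -/
def IsDyadic (x : ℝ) : Prop := ∃ k : ℤ, x = 2 ^ k

/-- The set `U₁^{x₁⁰, y₁⁰, δ}`. -/
def U1set (h : ℝ → ℝ) (ε ρ δ x₁0 y₁0 : ℝ) : Set (ℝ × ℝ) :=
  {z | 0 ≤ z.2 - y₁0 ∧ z.2 - y₁0 < ρ * min 1 δ ∧
    0 ≤ z.1 - x₁0 + ε * (deriv (deriv h) y₁0 / 2) * (z.2 - y₁0) ∧
    z.1 - x₁0 + ε * (deriv (deriv h) y₁0 / 2) * (z.2 - y₁0) < ε * ρ ^ 2 * δ}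

/-- The set `U₂^{t₂⁰, y₁⁰, y₂⁰, δ}`. -/
def U2set (h : ℝ → ℝ) (ε ρ δ t₂0 y₁0 y₂0 : ℝ) : Set (ℝ × ℝ) :=
  {z | 0 ≤ z.2 - y₂0 ∧ z.2 - y₂0 < ρ ∧
    0 ≤ z.1 - t₂0 + ε * (deriv h z.2 - deriv h y₁0 - deriv (deriv h) y₁0 / 2 * (z.2 - y₁0)) ∧
    z.1 - t₂0 + ε * (deriv h z.2 - deriv h y₁0 - deriv (deriv h) y₁0 / 2 * (z.2 - y₁0))
      < ε * ρ ^ 2 * δ}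

/-- The base point abscissa `x₂⁰` determined by `t₂⁰, y₁⁰, y₂⁰`. -/
def x20 (h : ℝ → ℝ) (ε t₂0 y₁0 y₂0 : ℝ) : ℝ :=
  t₂0 - ε * (deriv h y₂0 - deriv h y₁0 - deriv (deriv h) y₁0 / 2 * (y₂0 - y₁0))

/-- `(U₁^{x₁⁰,y₁⁰,δ}, U₂^{t₂⁰,y₁⁰,y₂⁰,δ})` is an admissible pair of type 1 at scales
`δ, ρ`, contained in `V_{j₁,ρ} × V_{j₂,ρ}` (so `y₂⁰ = j₂ ρ`): grid conditions on the
parameters plus the two admissibility inequalities. -/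
def Adm1 (h : ℝ → ℝ) (ε ρ δ C₀ : ℝ) (j₁ j₂ : ℤ) (x₁0 y₁0 t₂0 : ℝ) : Prop :=
  (∃ n : ℤ, x₁0 = -1 + (n : ℝ) * (ε * ρ ^ 2 * δ)) ∧ x₁0 ∈ Ico (-1 : ℝ) 1 ∧
  (∃ n : ℤ, t₂0 = -1 + (n : ℝ) * (ε * ρ ^ 2 * δ)) ∧ t₂0 ∈ Ico (-1 : ℝ) 1 ∧
  (∃ n : ℤ, y₁0 = (j₁ : ℝ) * ρ + (n : ℝ) * (ρ * min 1 δ)) ∧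
  (j₁ : ℝ) * ρ ≤ y₁0 ∧ y₁0 + ρ * min 1 δ ≤ (j₁ : ℝ) * ρ + ρ ∧
  C₀ ^ 2 / 4 * (ε * ρ ^ 2 * δ) ≤ |t₂0 - x₁0| ∧
  |t₂0 - x₁0| < 4 * C₀ ^ 2 * (ε * ρ ^ 2 * δ) ∧
  C₀ ^ 2 / 512 * (ε * ρ ^ 2 * max 1 δ) ≤
      |tau ε h (x20 h ε t₂0 y₁0 ((j₂ : ℝ) * ρ), (j₂ : ℝ) * ρ) (x₁0, y₁0)
        (x20 h ε t₂0 y₁0 ((j₂ : ℝ) * ρ), (j₂ : ℝ) * ρ)| ∧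
  |tau ε h (x20 h ε t₂0 y₁0 ((j₂ : ℝ) * ρ), (j₂ : ℝ) * ρ) (x₁0, y₁0)
        (x20 h ε t₂0 y₁0 ((j₂ : ℝ) * ρ), (j₂ : ℝ) * ρ)|
      < 5 * C₀ ^ 2 * (ε * ρ ^ 2 * max 1 δ)

lemma abs_sub_le_of_abs_deriv_le {f : ℝ → ℝ} {s : Set ℝ} {C a b : ℝ} (hs : Convex ℝ s)
    (hf : Differentiable ℝ f) (hC : ∀ y ∈ s, |deriv f y| ≤ C) (ha : a ∈ s) (hb : b ∈ s) :
    |f b - f a| ≤ C * |b - a| :=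
  hs.norm_image_sub_le_of_norm_deriv_le (fun x _ => hf x) hC ha hb

lemma abs_sub_sub_deriv_mul_le {f : ℝ → ℝ} {s : Set ℝ} {C a b : ℝ} (hs : Convex ℝ s)
    (hf : Differentiable ℝ f) (hf' : Differentiable ℝ (deriv f))
    (hC : ∀ y ∈ s, |deriv (deriv f) y| ≤ C) (ha : a ∈ s) (hb : b ∈ s) :
    |f b - f a - deriv f a * (b - a)| ≤ C * (b - a) ^ 2 := by
  have hC0 : 0 ≤ C := (abs_nonneg _).trans (hC a ha)
  set g : ℝ → ℝ := fun y => f y - deriv f a * y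
  have hg : ∀ y, HasDerivAt g (deriv f y - deriv f a) y := fun y => by
    simpa only [mul_one] using (hf y).hasDerivAt.fun_sub ((hasDerivAt_id' y).const_mul (deriv f a))
  have hg' : ∀ y ∈ uIcc a b, |deriv g y| ≤ C * |b - a| := fun y hy => by
    rw [(hg y).deriv]
    calc |deriv f y - deriv f a|
        ≤ C * |y - a| :=
          abs_sub_le_of_abs_deriv_le hs hf' hC ha (hs.ordConnected.uIcc_subset ha hb hy)
      _ ≤ C * |b - a| := mul_le_mul_of_nonneg_left (abs_sub_left_of_mem_uIcc hy) hC0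
  calc |f b - f a - deriv f a * (b - a)| = |g b - g a| := by congr 1; simp only [g]; ring
    _ ≤ C * |b - a| * |b - a| :=
      abs_sub_le_of_abs_deriv_le (convex_uIcc a b) (fun y => (hg y).differentiableAt) hg'
        left_mem_uIcc right_mem_uIcc
    _ = C * (b - a) ^ 2 := by rw [mul_assoc, abs_mul_abs_self, sq]

/-- Together with a window for `z.2`, the ranges `[0, ε ρ² δ)` of these sheared abscissae
cut out `U1set` and `U2set`. -/
def shearU1 (h : ℝ → ℝ) (ε x₁0 y₁0 : ℝ) (z : ℝ × ℝ) : ℝ :=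
  z.1 - x₁0 + ε * (deriv (deriv h) y₁0 / 2) * (z.2 - y₁0)

def shearU2 (h : ℝ → ℝ) (ε t₂0 y₁0 : ℝ) (z : ℝ × ℝ) : ℝ :=
  z.1 - t₂0 + ε * (deriv h z.2 - deriv h y₁0 - deriv (deriv h) y₁0 / 2 * (z.2 - y₁0))

section Tau

variable {h : ℝ → ℝ} {ε : ℝ}

lemma tau_eq_tau_sub (z w z₁ z₂ : ℝ × ℝ) :
    tau ε h z z₁ z₂ =
      tau ε h w z₁ z₂ - ε / 2 * (deriv (deriv h) z.2 - deriv (deriv h) w.2) * (z₂.2 - z₁.2) := by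
  simp only [tau]; ring

lemma tau_eq_shear (x x₁0 y₁0 t₂0 : ℝ) (z₁ z₂ : ℝ × ℝ) :
    tau ε h (x, y₁0) z₁ z₂ =
      t₂0 - x₁0 + (shearU2 h ε t₂0 y₁0 z₂ - shearU1 h ε x₁0 y₁0 z₁)
        - ε * (deriv h z₁.2 - deriv h y₁0 - deriv (deriv h) y₁0 * (z₁.2 - y₁0)) := by
  simp only [tau, shearU1, shearU2]; ring

lemma tau_base_eq (x₁0 y₁0 t₂0 y₂0 : ℝ) :
    tau ε h (x20 h ε t₂0 y₁0 y₂0, y₂0) (x₁0, y₁0) (x20 h ε t₂0 y₁0 y₂0, y₂0) =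
      t₂0 - x₁0 - ε / 2 * (deriv (deriv h) y₂0 - deriv (deriv h) y₁0) * (y₂0 - y₁0) := by
  simp only [tau, x20]; ring

lemma abs_shearU2_sub_shearU1_le {ρ δ x₁0 y₁0 t₂0 y₂0 : ℝ} {z₁ z₂ : ℝ × ℝ}
    (hz₁ : z₁ ∈ U1set h ε ρ δ x₁0 y₁0) (hz₂ : z₂ ∈ U2set h ε ρ δ t₂0 y₁0 y₂0) :
    |shearU2 h ε t₂0 y₁0 z₂ - shearU1 h ε x₁0 y₁0 z₁| ≤ ε * ρ ^ 2 * δ := by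
  obtain ⟨-, -, h₁, h₁'⟩ := hz₁
  obtain ⟨-, -, h₂, h₂'⟩ := hz₂
  simp only [shearU1, shearU2]
  exact abs_le.mpr ⟨by linarith, by linarith⟩

end Tau

section Errors

variable {h : ℝ → ℝ} {C₃ C₀ ε ρ δ x₁0 y₁0 t₂0 y₂0 : ℝ} {z₁ z₂ : ℝ × ℝ}

lemma abs_tau_fst_sub_le (hdh : Differentiable ℝ (deriv h))
    (hddh : Differentiable ℝ (deriv (deriv h)))
    (hC₃ : ∀ y ∈ Icc (-1 : ℝ) 1, |deriv (deriv (deriv h)) y| ≤ C₃) (hε : 0 ≤ ε) (hρ : 0 < ρ)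
    (hy₁0 : y₁0 ∈ Icc (-1 : ℝ) 1) (hy₁ : z₁.2 ∈ Icc (-1 : ℝ) 1)
    (hy₂₁ : |z₂.2 - z₁.2| ≤ C₀ * ρ)
    (hz₁ : z₁ ∈ U1set h ε ρ δ x₁0 y₁0) (hz₂ : z₂ ∈ U2set h ε ρ δ t₂0 y₁0 y₂0) :
    |tau ε h z₁ z₁ z₂ - (t₂0 - x₁0)| ≤ (1 + C₃ + C₃ * C₀) * (ε * ρ ^ 2 * δ) := by
  have hW := abs_shearU2_sub_shearU1_le hz₁ hz₂
  have hC₃0 : 0 ≤ C₃ := (abs_nonneg _).trans (hC₃ _ hy₁0)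
  have hC₀ : 0 ≤ C₀ := nonneg_of_mul_nonneg_left ((abs_nonneg _).trans hy₂₁) hρ
  obtain ⟨hd, hd', -, -⟩ := hz₁
  have hm : 0 ≤ min 1 δ := nonneg_of_mul_nonneg_right (hd.trans hd'.le) hρ
  have hδ : 0 ≤ δ := hm.trans (min_le_right 1 δ)
  have hdδ : z₁.2 - y₁0 ≤ ρ * δ := hd'.le.trans (by gcongr; exact min_le_right 1 δ)
  have hsq : (z₁.2 - y₁0) ^ 2 ≤ ρ ^ 2 * δ :=
    calc (z₁.2 - y₁0) ^ 2 ≤ (ρ * min 1 δ) ^ 2 := pow_le_pow_left₀ hd hd'.le 2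
      _ = ρ ^ 2 * (min 1 δ * min 1 δ) := by ring
      _ ≤ ρ ^ 2 * δ := by
        gcongr; nlinarith [min_le_left 1 δ, min_le_right 1 δ]
  have hR : |ε * (deriv h z₁.2 - deriv h y₁0 - deriv (deriv h) y₁0 * (z₁.2 - y₁0))|
      ≤ ε * (C₃ * (ρ ^ 2 * δ)) := by
    rw [abs_mul, abs_of_nonneg hε]
    gcongr
    exact (abs_sub_sub_deriv_mul_le (convex_Icc (-1 : ℝ) 1) hdh hddh hC₃ hy₁0 hy₁).trans
      (by gcongr)
  have hL' : |deriv (deriv h) z₁.2 - deriv (deriv h) y₁0| ≤ C₃ * (ρ * δ) :=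
    (abs_sub_le_of_abs_deriv_le (convex_Icc (-1 : ℝ) 1) hddh hC₃ hy₁0 hy₁).trans
      (by rw [abs_of_nonneg hd]; exact mul_le_mul_of_nonneg_left hdδ hC₃0)
  have hL : |ε / 2 * (deriv (deriv h) z₁.2 - deriv (deriv h) y₁0) * (z₂.2 - z₁.2)|
      ≤ ε / 2 * (C₃ * (ρ * δ)) * (C₀ * ρ) := by
    rw [abs_mul, abs_mul, abs_of_nonneg (by positivity : 0 ≤ ε / 2)]
    have : 0 ≤ ε / 2 * (C₃ * (ρ * δ)) := by positivity
    gcongr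
  have h₃₀ : 0 ≤ C₃ * C₀ * (ε * ρ ^ 2 * δ) := by positivity
  rw [tau_eq_tau_sub z₁ (x₁0, y₁0), tau_eq_shear x₁0 x₁0 y₁0 t₂0]
  rw [abs_le] at hW hR hL ⊢
  constructor <;> linarith

lemma abs_tau_snd_sub_le (hdh : Differentiable ℝ (deriv h))
    (hddh : Differentiable ℝ (deriv (deriv h)))
    (hC₃ : ∀ y ∈ Icc (-1 : ℝ) 1, |deriv (deriv (deriv h)) y| ≤ C₃) (hε : 0 ≤ ε) (hρ : 0 < ρ)
    (hy₁0 : y₁0 ∈ Icc (-1 : ℝ) 1) (hy₁ : z₁.2 ∈ Icc (-1 : ℝ) 1)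
    (hy₂0 : y₂0 ∈ Icc (-1 : ℝ) 1) (hy₂ : z₂.2 ∈ Icc (-1 : ℝ) 1)
    (hy₂₁ : |z₂.2 - z₁.2| ≤ C₀ * ρ) (hy₂₁0 : |y₂0 - y₁0| ≤ C₀ * ρ)
    (hz₁ : z₁ ∈ U1set h ε ρ δ x₁0 y₁0) (hz₂ : z₂ ∈ U2set h ε ρ δ t₂0 y₁0 y₂0) :
    |tau ε h z₂ z₁ z₂ - tau ε h (x20 h ε t₂0 y₁0 y₂0, y₂0) (x₁0, y₁0) (x20 h ε t₂0 y₁0 y₂0, y₂0)|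
      ≤ (1 + C₃ + C₃ * C₀) * (ε * ρ ^ 2 * max 1 δ) := by
  have hW := abs_shearU2_sub_shearU1_le hz₁ hz₂
  have hC₃0 : 0 ≤ C₃ := (abs_nonneg _).trans (hC₃ _ hy₁0)
  have hC₀ : 0 ≤ C₀ := nonneg_of_mul_nonneg_left ((abs_nonneg _).trans hy₂₁) hρ
  obtain ⟨hd₁, hd₁', -, -⟩ := hz₁
  obtain ⟨hd₂, hd₂', -, -⟩ := hz₂
  have hd₁ρ : z₁.2 - y₁0 ≤ ρ := hd₁'.le.trans (mul_le_of_le_one_right hρ.le (min_le_left 1 δ))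
  have hR : |ε * (deriv h z₁.2 - deriv h y₁0 - deriv (deriv h) y₁0 * (z₁.2 - y₁0))|
      ≤ ε * (C₃ * ρ ^ 2) := by
    rw [abs_mul, abs_of_nonneg hε]
    gcongr
    exact (abs_sub_sub_deriv_mul_le (convex_Icc (-1 : ℝ) 1) hdh hddh hC₃ hy₁0 hy₁).trans
      (by gcongr)
  have hL₂ : |deriv (deriv h) z₂.2 - deriv (deriv h) y₂0| ≤ C₃ * ρ :=
    (abs_sub_le_of_abs_deriv_le (convex_Icc (-1 : ℝ) 1) hddh hC₃ hy₂0 hy₂).trans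
      (by rw [abs_of_nonneg hd₂]; exact mul_le_mul_of_nonneg_left hd₂'.le hC₃0)
  have hL₂₁ : |deriv (deriv h) y₂0 - deriv (deriv h) y₁0| ≤ C₃ * (C₀ * ρ) :=
    (abs_sub_le_of_abs_deriv_le (convex_Icc (-1 : ℝ) 1) hddh hC₃ hy₁0 hy₂0).trans
      (mul_le_mul_of_nonneg_left hy₂₁0 hC₃0)
  have hshift : |(z₂.2 - z₁.2) - (y₂0 - y₁0)| ≤ ρ := abs_le.mpr ⟨by linarith, by linarith⟩
  have hL : |ε / 2 * ((deriv (deriv h) z₂.2 - deriv (deriv h) y₂0) * (z₂.2 - z₁.2)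
      + (deriv (deriv h) y₂0 - deriv (deriv h) y₁0) * ((z₂.2 - z₁.2) - (y₂0 - y₁0)))|
      ≤ ε / 2 * (C₃ * ρ * (C₀ * ρ) + C₃ * (C₀ * ρ) * ρ) := by
    rw [abs_mul, abs_of_nonneg (by positivity : 0 ≤ ε / 2)]
    gcongr
    refine (abs_add_le _ _).trans ?_
    rw [abs_mul, abs_mul]
    gcongr
  have hmax : ε * ρ ^ 2 * δ ≤ ε * ρ ^ 2 * max 1 δ := by gcongr; exact le_max_right 1 δ
  have hmax' : ε * ρ ^ 2 ≤ ε * ρ ^ 2 * max 1 δ :=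
    le_mul_of_one_le_right (by positivity) (le_max_left 1 δ)
  have h₃max := mul_le_mul_of_nonneg_left hmax' hC₃0
  have h₃₀max := mul_le_mul_of_nonneg_left hmax' (mul_nonneg hC₃0 hC₀)
  rw [tau_eq_tau_sub z₂ (x₁0, y₁0), tau_eq_shear x₁0 x₁0 y₁0 t₂0, tau_base_eq]
  rw [abs_le] at hW hR hL ⊢
  constructor <;> linarith

lemma strip_bounds {j₁ j₂ : ℤ} {ρ m C₀ y₁0 y₁ y₂ : ℝ} (hρ : 0 < ρ) (hC₀ : 2 ≤ C₀)
    (hj : |(j₂ : ℝ) - j₁| < C₀ / 2) (hI₁ : -1 ≤ (j₁ : ℝ) * ρ) (hI₁' : (j₁ : ℝ) * ρ + ρ ≤ 1)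
    (hI₂ : -1 ≤ (j₂ : ℝ) * ρ) (hI₂' : (j₂ : ℝ) * ρ + ρ ≤ 1)
    (hy₁0 : (j₁ : ℝ) * ρ ≤ y₁0) (hy₁0' : y₁0 + m ≤ (j₁ : ℝ) * ρ + ρ)
    (hy₁ : 0 ≤ y₁ - y₁0) (hy₁' : y₁ - y₁0 < m) (hy₂ : 0 ≤ y₂ - j₂ * ρ) (hy₂' : y₂ - j₂ * ρ < ρ) :
    y₁0 ∈ Icc (-1 : ℝ) 1 ∧ y₁ ∈ Icc (-1 : ℝ) 1 ∧ (j₂ : ℝ) * ρ ∈ Icc (-1 : ℝ) 1 ∧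
      y₂ ∈ Icc (-1 : ℝ) 1 ∧ |y₂ - y₁| ≤ C₀ * ρ ∧ |j₂ * ρ - y₁0| ≤ C₀ * ρ := by
  obtain ⟨hj, hj'⟩ := abs_lt.mp hj
  have hjρ : -(C₀ / 2 * ρ) ≤ (j₂ - j₁) * ρ ∧ (j₂ - j₁) * ρ ≤ C₀ / 2 * ρ :=
    ⟨by nlinarith, by nlinarith⟩
  have hρC₀ : ρ ≤ C₀ / 2 * ρ := by nlinarith
  refine ⟨⟨?_, ?_⟩, ⟨?_, ?_⟩, ⟨?_, ?_⟩, ⟨?_, ?_⟩, abs_le.mpr ⟨?_, ?_⟩, abs_le.mpr ⟨?_, ?_⟩⟩ <;>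
    linarith

lemma one_add_add_mul_le_sq {C₃ C₀ : ℝ} (hC₃ : 0 ≤ C₃) (hC₀ : 4096 * (1 + C₃) ≤ C₀) :
    1 + C₃ + C₃ * C₀ ≤ C₀ ^ 2 / 2048 := by
  nlinarith

lemma abs_bounds_of_abs_sub_le {τ d e lo hi : ℝ} (hlo : lo ≤ |d|) (hhi : |d| ≤ hi)
    (he : |τ - d| ≤ e) : lo - e ≤ |τ| ∧ |τ| ≤ hi + e :=
  ⟨by linarith [abs_sub_abs_le_abs_sub d τ, abs_sub_comm τ d],
    by linarith [abs_sub_abs_le_abs_sub τ d]⟩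

theorem sizeofdeltas_type1_general (C₃ : ℝ) (Cl : ℕ → ℝ) :
    ∃ C₀₀ : ℝ, 1 ≤ C₀₀ ∧
    ∀ h : ℝ → ℝ, CubicType C₃ Cl h →
    ∀ ε ρ δ C₀ : ℝ, 0 < ε → ε ≤ 1 → 0 < ρ → ρ ≤ 1 → 0 < δ → ε * ρ ^ 2 * δ ≤ 1 →
      IsDyadic ρ → IsDyadic δ → IsDyadic C₀ → C₀₀ ≤ C₀ →
    ∀ j₁ j₂ : ℤ, C₀ / 8 < |(j₂ : ℝ) - (j₁ : ℝ)| → |(j₂ : ℝ) - (j₁ : ℝ)| < C₀ / 2 →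
      -1 ≤ (j₁ : ℝ) * ρ → (j₁ : ℝ) * ρ + ρ ≤ 1 → -1 ≤ (j₂ : ℝ) * ρ → (j₂ : ℝ) * ρ + ρ ≤ 1 →
    ∀ x₁0 y₁0 t₂0 : ℝ, Adm1 h ε ρ δ C₀ j₁ j₂ x₁0 y₁0 t₂0 →
    ∀ z₁ ∈ U1set h ε ρ δ x₁0 y₁0, ∀ z₂ ∈ U2set h ε ρ δ t₂0 y₁0 ((j₂ : ℝ) * ρ),
      C₀ ^ 2 * ε * ρ ^ 2 * δ / 8 ≤ |tau ε h z₁ z₁ z₂| ∧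
      |tau ε h z₁ z₁ z₂| ≤ 8 * (C₀ ^ 2 * ε * ρ ^ 2 * δ) ∧
      C₀ ^ 2 * ε * ρ ^ 2 * max 1 δ / 1000 ≤ |tau ε h z₂ z₁ z₂| ∧
      |tau ε h z₂ z₁ z₂| ≤ 1000 * (C₀ ^ 2 * ε * ρ ^ 2 * max 1 δ) := by
  refine ⟨4096 * (1 + |C₃|), by linarith [abs_nonneg C₃], ?_⟩
  intro h hh ε ρ δ C₀ hε _ hρ _ hδ _ _ _ _ hC₀ j₁ j₂ _ hj hI₁ hI₁' hI₂ hI₂' x₁0 y₁0 t₂0 hadm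
    z₁ hz₁ z₂ hz₂
  obtain ⟨hsmooth, -, -, -, h₃bounds, -⟩ := hh
  obtain ⟨-, -, -, -, -, hy₁0, hy₁0', hx, hx', hT, hT'⟩ := hadm
  have hC₃ : ∀ y ∈ Icc (-1 : ℝ) 1, |deriv (deriv (deriv h)) y| ≤ C₃ := fun y hy => (h₃bounds y hy).2
  have hC₃0 : 0 ≤ C₃ := (abs_nonneg _).trans (hC₃ 0 (by norm_num))
  have hC₀' : 4096 * (1 + C₃) ≤ C₀ := le_trans (by gcongr; exact le_abs_self C₃) hC₀
  have hK := one_add_add_mul_le_sq hC₃0 hC₀'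
  obtain ⟨hdh, hcont⟩ := contDiff_infty_iff_deriv.mp (contDiff_infty_iff_deriv.mp hsmooth).2
  have hddh := (contDiff_infty_iff_deriv.mp hcont).1
  obtain ⟨hy₁0I, hy₁I, hy₂0I, hy₂I, hy₂₁, hy₂₁0⟩ := strip_bounds hρ (by linarith) hj hI₁ hI₁'
    hI₂ hI₂' hy₁0 hy₁0' hz₁.1 hz₁.2.1 hz₂.1 hz₂.2.1
  obtain ⟨l₁, u₁⟩ := abs_bounds_of_abs_sub_le hx hx'.le
    (abs_tau_fst_sub_le hdh hddh hC₃ hε.le hρ hy₁0I hy₁I hy₂₁ hz₁ hz₂)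
  obtain ⟨l₂, u₂⟩ := abs_bounds_of_abs_sub_le hT hT'.le
    (abs_tau_snd_sub_le hdh hddh hC₃ hε.le hρ hy₁0I hy₁I hy₂0I hy₂I hy₂₁ hy₂₁0 hz₁ hz₂)
  have hM : 0 ≤ ε * ρ ^ 2 * δ := by positivity
  have hN : 0 ≤ ε * ρ ^ 2 * max 1 δ := by positivity
  have k₁ := mul_le_mul_of_nonneg_right hK hM
  have k₂ := mul_le_mul_of_nonneg_right hK hN
  have m₁ := mul_nonneg (sq_nonneg C₀) hM
  have m₂ := mul_nonneg (sq_nonneg C₀) hN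
  refine ⟨?_, ?_, ?_, ?_⟩ <;> linarith

/-- Lemma 3.3 (Lemma `sizeofdeltas`): on an admissible pair of type 1 at scale `δ`,
`|τ_{z₁}(z₁,z₂)| ∼₈ C₀² ε ρ² δ` and `|τ_{z₂}(z₁,z₂)| ∼₁₀₀₀ C₀² ε ρ² (1 ∨ δ)`. -/
theorem sizeofdeltas_type1 (C₃ : ℝ) (hC₃ : 0 < C₃) (Cl : ℕ → ℝ) :
    ∃ C₀₀ : ℝ, 1 ≤ C₀₀ ∧
    ∀ h : ℝ → ℝ, CubicType C₃ Cl h →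
    ∀ ε ρ δ C₀ : ℝ, 0 < ε → ε ≤ 1 → 0 < ρ → ρ ≤ 1 → 0 < δ → ε * ρ ^ 2 * δ ≤ 1 →
      IsDyadic ρ → IsDyadic δ → IsDyadic C₀ → C₀₀ ≤ C₀ →
    ∀ j₁ j₂ : ℤ, C₀ / 8 < |(j₂ : ℝ) - (j₁ : ℝ)| → |(j₂ : ℝ) - (j₁ : ℝ)| < C₀ / 2 →
      -1 ≤ (j₁ : ℝ) * ρ → (j₁ : ℝ) * ρ + ρ ≤ 1 → -1 ≤ (j₂ : ℝ) * ρ → (j₂ : ℝ) * ρ + ρ ≤ 1 →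
    ∀ x₁0 y₁0 t₂0 : ℝ, Adm1 h ε ρ δ C₀ j₁ j₂ x₁0 y₁0 t₂0 →
    ∀ z₁ ∈ U1set h ε ρ δ x₁0 y₁0, ∀ z₂ ∈ U2set h ε ρ δ t₂0 y₁0 ((j₂ : ℝ) * ρ),
      C₀ ^ 2 * ε * ρ ^ 2 * δ / 8 ≤ |tau ε h z₁ z₁ z₂| ∧
      |tau ε h z₁ z₁ z₂| ≤ 8 * (C₀ ^ 2 * ε * ρ ^ 2 * δ) ∧
      C₀ ^ 2 * ε * ρ ^ 2 * max 1 δ / 1000 ≤ |tau ε h z₂ z₁ z₂| ∧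
      |tau ε h z₂ z₁ z₂| ≤ 1000 * (C₀ ^ 2 * ε * ρ ^ 2 * max 1 δ) :=
  sizeofdeltas_type1_general C₃ Cl
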